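/- Let X, Y be locally convex Hausdorff real topological vector spaces, U an index set, F_u : X × Y → ℝ ∪ {±∞}, q(x') = inf_{(u,μ)∈U×Y*} (F_u)*(x',μ), and ℱ^# = {(x',s) : ∃(u,μ), (F_u)*(x',μ) ≤ s}. If dom q* ≠ ∅, then epi q** equals the weak*-closed convex hull of ℱ^#. -/

import Mathlib

/-!
Since `ℱ^# ⊆ epi q ⊆ closure ℱ^#`, the set `ℱ^#` may be replaced by `epi q`. Now `epi q**`
is the intersection of the closed half-spaces `{(x', s) | x' b - m ≤ s}` over the affine
minorants `x' ↦ x' b - m` of `q` (i.e. over `q* b ≤ m`), each of which contains `epi q`: this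
gives `⊇`. For `⊆`, a point outside the closed convex hull is strictly separated from it by a
functional `(x', s) ↦ x' a + c s`, as the dual of the weak* dual of `X` is `X`. If `c > 0`, the
separating hyperplane is the graph of an affine minorant of `q` lying above the point. If
`c ≤ 0`, the functional `x' ↦ x' a` is bounded below on `dom q`, so adding a large multiple of
`-a` to an affine minorant `x' ↦ x' a₀ - M`, which exists as `a₀ ∈ dom q*`, again gives one
above the point.
-/

open Filter Topology

variable {X Y : Type*}
  [AddCommGroup X] [Module ℝ X] [TopologicalSpace X] [IsTopologicalAddGroup X]
  [ContinuousSMul ℝ X] [LocallyConvexSpace ℝ X] [T2Space X]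
  [AddCommGroup Y] [Module ℝ Y] [TopologicalSpace Y] [IsTopologicalAddGroup Y]
  [ContinuousSMul ℝ Y] [LocallyConvexSpace ℝ Y] [T2Space Y]

/-- Fenchel conjugate of `F : X × Y → ℝ̄`, with first dual variable in the
weak* dual of `X`. -/
noncomputable def wConj (F : X → Y → EReal) (x' : WeakDual ℝ X) (y' : Y →L[ℝ] ℝ) : EReal :=
  ⨆ p : X × Y, (((x' p.1 + y' p.2 : ℝ) : EReal) - F p.1 p.2)

/-- Conjugate on `X` of a function defined on the weak* dual of `X`. -/
noncomputable def dConj (q : WeakDual ℝ X → EReal) (a : X) : EReal :=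
  ⨆ x' : WeakDual ℝ X, (((x' a : ℝ) : EReal) - q x')

/-- Biconjugate (on the weak* dual again) of a function on the weak* dual. -/
noncomputable def dBiconj (q : WeakDual ℝ X → EReal) (x' : WeakDual ℝ X) : EReal :=
  ⨆ a : X, (((x' a : ℝ) : EReal) - dConj q a)

theorem EReal.coe_sub_le_coe_iff (r m : ℝ) (y : EReal) :
    (r : EReal) - y ≤ m ↔ ((r - m : ℝ) : EReal) ≤ y := by
  induction y using EReal.rec with
  | bot =>
    simp only [EReal.coe_sub_bot, top_le_iff, le_bot_iff, EReal.coe_ne_top, EReal.coe_ne_bot]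
  | coe y => norm_cast; constructor <;> intro h <;> linarith
  | top => simp [EReal.sub_top]

theorem closure_convexHull_eq_of_subset_of_subset_closure {E : Type*} [AddCommGroup E]
    [Module ℝ E] [TopologicalSpace E] [IsTopologicalAddGroup E] [ContinuousConstSMul ℝ E]
    {s t : Set E} (hst : s ⊆ t) (hts : t ⊆ closure s) :
    closure (convexHull ℝ t) = closure (convexHull ℝ s) := by
  simp only [← closedConvexHull_eq_closure_convexHull]
  refine le_antisymm ?_ ((closedConvexHull ℝ).monotone hst)
  simpa using (closedConvexHull ℝ).monotone hts

theorem closure_convexHull_setOf_iInf_le {A ι : Type*} [AddCommGroup A] [Module ℝ A]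
    [TopologicalSpace A] [IsTopologicalAddGroup A] [ContinuousConstSMul ℝ A]
    (φ : ι → A → EReal) :
    closure (convexHull ℝ {z : A × ℝ | ⨅ i, φ i z.1 ≤ z.2}) =
      closure (convexHull ℝ {z : A × ℝ | ∃ i, φ i z.1 ≤ z.2}) := by
  refine closure_convexHull_eq_of_subset_of_subset_closure ?_ ?_
  · rintro z ⟨i, hi⟩
    exact (iInf_le (fun i => φ i z.1) i).trans hi
  rintro ⟨x, s⟩ (h : ⨅ i, φ i x ≤ s)
  have hlim : Tendsto (fun ε : ℝ => (x, s + ε)) (𝓝[>] 0) (𝓝 (x, s)) := by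
    refine tendsto_nhdsWithin_of_tendsto_nhds ?_
    simpa using (continuous_const.prodMk (continuous_const.add continuous_id)).tendsto
      (0 : ℝ) (f := fun ε : ℝ => (x, s + ε))
  refine mem_closure_of_tendsto hlim ?_
  filter_upwards [self_mem_nhdsWithin] with ε (hε : 0 < ε)
  have : ⨅ i, φ i x < ((s + ε : ℝ) : EReal) :=
    h.trans_lt (EReal.coe_lt_coe_iff.2 (by linarith))
  obtain ⟨i, hi⟩ := iInf_lt_iff.1 this
  exact ⟨i, hi.le⟩

section

variable {E : Type*} [AddCommGroup E] [Module ℝ E] [TopologicalSpace E]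

-- `WeakDual` is a type synonym, so the `WeakBilin` instance is not found through it.
instance WeakDual.instLocallyConvexSpace : LocallyConvexSpace ℝ (WeakDual ℝ E) :=
  WeakBilin.locallyConvexSpace

theorem WeakDual.exists_eval_add_mul_eq (f : WeakDual ℝ E × ℝ →L[ℝ] ℝ) :
    ∃ (a : E) (c : ℝ), ∀ x' s, f (x', s) = x' a + c * s := by
  obtain ⟨a, ha⟩ := LinearMap.dualEmbedding_surjective (topDualPairing ℝ E)
    (f.comp (ContinuousLinearMap.inl ℝ _ ℝ))
  have hx' (x' : WeakDual ℝ E) : f (x', 0) = x' a := (DFunLike.congr_fun ha x').symm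
  refine ⟨a, f (0, 1), fun x' s => ?_⟩
  have hdecomp : (x', s) = (x', 0) + s • ((0 : WeakDual ℝ E), (1 : ℝ)) := by ext <;> simp
  rw [hdecomp, map_add, map_smul, hx', smul_eq_mul, mul_comm]

theorem dConj_le_coe_iff {q : WeakDual ℝ E → EReal} {b : E} {m : ℝ} :
    dConj q b ≤ m ↔ ∀ x', ((x' b - m : ℝ) : EReal) ≤ q x' := by
  simp only [dConj, iSup_le_iff, EReal.coe_sub_le_coe_iff]

theorem coe_sub_le_dBiconj {q : WeakDual ℝ E → EReal} {b : E} {m : ℝ} (h : dConj q b ≤ m)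
    (x' : WeakDual ℝ E) : ((x' b - m : ℝ) : EReal) ≤ dBiconj q x' :=
  le_iSup_of_le b (by rw [EReal.coe_sub]; exact EReal.sub_le_sub le_rfl h)

theorem dBiconj_le_coe_iff {q : WeakDual ℝ E → EReal} {x' : WeakDual ℝ E} {s : ℝ} :
    dBiconj q x' ≤ s ↔ ∀ b (m : ℝ), dConj q b ≤ m → x' b - m ≤ s := by
  refine ⟨fun h b m hm => EReal.coe_le_coe_iff.1 ((coe_sub_le_dBiconj hm x').trans h),
    fun h => iSup_le fun b => ?_⟩
  rw [EReal.coe_sub_le_coe_iff, ← EReal.le_of_forall_lt_iff_le]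
  intro m hm
  exact EReal.coe_le_coe_iff.2 (by linarith [h b m hm.le])

theorem closure_convexHull_epi_subset_epi_dBiconj (q : WeakDual ℝ E → EReal) :
    closure (convexHull ℝ {z : WeakDual ℝ E × ℝ | q z.1 ≤ z.2}) ⊆
      {z | dBiconj q z.1 ≤ z.2} := by
  intro z hz
  refine dBiconj_le_coe_iff.2 fun b m hbm => ?_
  have hlin : IsLinearMap ℝ fun z : WeakDual ℝ E × ℝ => z.1 b - z.2 :=
    ⟨fun z w => by
      show z.1 b + w.1 b - (z.2 + w.2) = z.1 b - z.2 + (w.1 b - w.2); ring,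
     fun r z => by show r * z.1 b - r * z.2 = r * (z.1 b - z.2); ring⟩
  have hepi : {z : WeakDual ℝ E × ℝ | q z.1 ≤ z.2} ⊆ {z | z.1 b - z.2 ≤ m} := by
    intro z hz
    have := EReal.coe_le_coe_iff.1 ((dConj_le_coe_iff.1 hbm z.1).trans hz)
    show z.1 b - z.2 ≤ m
    linarith
  exact sub_le_comm.1 <| closure_minimal (convexHull_min hepi (convex_halfSpace_le hlin m))
    (isClosed_le (((WeakDual.eval_continuous b).comp continuous_fst).sub continuous_snd)
      continuous_const) hz

theorem dConj_neg_inv_smul_le {q : WeakDual ℝ E → EReal} {a : E} {c u : ℝ} (hc : 0 < c)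
    (hsep : ∀ x' (s : ℝ), q x' ≤ s → u < x' a + c * s) :
    dConj q (-(c⁻¹ • a)) ≤ ((-(u / c) : ℝ) : EReal) := by
  refine dConj_le_coe_iff.2 fun x' => ?_
  rw [← EReal.le_of_forall_lt_iff_le]
  intro s hs
  have := hsep x' s hs.le
  rw [EReal.coe_le_coe_iff, map_neg, map_smul, smul_eq_mul]
  field_simp
  linarith

theorem dConj_sub_smul_le {q : WeakDual ℝ E → EReal} {a₀ a : E} {M t u : ℝ}
    (hM : dConj q a₀ ≤ M) (ht : 0 ≤ t) (hbdd : ∀ x' (s : ℝ), q x' ≤ s → u ≤ x' a) :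
    dConj q (a₀ - t • a) ≤ ((M - t * u : ℝ) : EReal) := by
  rw [dConj_le_coe_iff] at hM ⊢
  intro x'
  rw [← EReal.le_of_forall_lt_iff_le]
  intro s hs
  have h1 := EReal.coe_le_coe_iff.1 ((hM x').trans hs.le)
  have h2 := hbdd x' s hs.le
  rw [EReal.coe_le_coe_iff, map_sub, map_smul, smul_eq_mul]
  nlinarith [mul_le_mul_of_nonneg_left h2 ht]

theorem exists_dConj_le_lt_of_separated {q : WeakDual ℝ E → EReal}
    (hdom : ∃ a₀, dConj q a₀ ≠ ⊤)
    {a : E} {c u : ℝ} (hsep : ∀ x' (s : ℝ), q x' ≤ s → u < x' a + c * s)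
    {x₀ : WeakDual ℝ E} {s₀ : ℝ} (h₀ : x₀ a + c * s₀ < u) :
    ∃ (b : E) (m : ℝ), dConj q b ≤ m ∧ s₀ < x₀ b - m := by
  rcases lt_or_ge 0 c with hc | hc
  · refine ⟨_, _, dConj_neg_inv_smul_le hc hsep, ?_⟩
    rw [map_neg, map_smul, smul_eq_mul]
    field_simp
    linarith
  · -- as `c ≤ 0`, raising a point of `epi q` to height `≥ s₀` only lowers `x' a + c s`
    set u' := u - c * s₀
    have hbdd : ∀ x' (s : ℝ), q x' ≤ s → u' ≤ x' a := by
      intro x' s hs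
      have := hsep x' (max s s₀) (hs.trans (EReal.coe_le_coe_iff.2 (le_max_left _ _)))
      nlinarith [mul_le_mul_of_nonpos_left (le_max_right s s₀) hc]
    obtain ⟨a₀, ha₀⟩ := hdom
    obtain ⟨M, hM⟩ : ∃ M : ℝ, dConj q a₀ ≤ M := ⟨_, EReal.le_coe_toReal ha₀⟩
    have hgap : 0 < u' - x₀ a := by linarith
    set t : ℝ := (|M - x₀ a₀ + s₀| + 1) / (u' - x₀ a)
    have ht : t * (u' - x₀ a) = |M - x₀ a₀ + s₀| + 1 := div_mul_cancel₀ _ hgap.ne'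
    refine ⟨a₀ - t • a, _, dConj_sub_smul_le hM (by positivity) hbdd, ?_⟩
    rw [map_sub, map_smul, smul_eq_mul]
    linarith [le_abs_self (M - x₀ a₀ + s₀)]

theorem epi_dBiconj_eq_closure_convexHull_epi {q : WeakDual ℝ E → EReal}
    (hdom : ∃ a, dConj q a ≠ ⊤) :
    {z : WeakDual ℝ E × ℝ | dBiconj q z.1 ≤ z.2} =
      closure (convexHull ℝ {z | q z.1 ≤ z.2}) := by
  refine Set.Subset.antisymm (fun z₀ hz₀ => ?_) (closure_convexHull_epi_subset_epi_dBiconj q)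
  by_contra hz₀C
  obtain ⟨f, u, hf₀, hf⟩ := geometric_hahn_banach_point_closed
    (convex_convexHull ℝ _).closure isClosed_closure hz₀C
  obtain ⟨a, c, hfac⟩ := WeakDual.exists_eval_add_mul_eq f
  have hsep : ∀ x' (s : ℝ), q x' ≤ s → u < x' a + c * s := fun x' s hs =>
    hfac x' s ▸ hf _ (subset_closure (subset_convexHull ℝ _ hs))
  obtain ⟨b, m, hbm, hlt⟩ :=
    exists_dConj_le_lt_of_separated hdom hsep (hfac z₀.1 z₀.2 ▸ hf₀)
  exact hlt.not_ge (dBiconj_le_coe_iff.1 hz₀ b m hbm)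

end

/-- If `dom q* ≠ ∅` then `epi q**` is the weak*-closed convex hull of `ℱ^#`. -/
theorem stmt_10 {U : Type*} (F : U → X → Y → EReal)
    (q : WeakDual ℝ X → EReal)
    (hq : q = fun x' => ⨅ w : U × (Y →L[ℝ] ℝ), wConj (F w.1) x' w.2)
    (hdom : ∃ a : X, dConj q a ≠ ⊤) :
    {z : WeakDual ℝ X × ℝ | dBiconj q z.1 ≤ (z.2 : EReal)} =
      closure (convexHull ℝ
        {z : WeakDual ℝ X × ℝ | ∃ (u : U) (μ : Y →L[ℝ] ℝ),
          wConj (F u) z.1 μ ≤ (z.2 : EReal)}) := by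
  subst hq
  rw [epi_dBiconj_eq_closure_convexHull_epi hdom]
  simpa only [Prod.exists] using
    closure_convexHull_setOf_iInf_le fun (w : U × (Y →L[ℝ] ℝ)) x' => wConj (F w.1) x' w.2
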